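/- Every point in the polytope {x : Pᵢx ≤ qᵢ - r‖Pᵢ‖ ∀i} has Euclidean distance at least r to the complement of the polytope {x : Px ≤ q}, assuming each row Pᵢ is nonzero. -/

import Mathlib

open RealInnerProductSpace

theorem lt_norm_sub_of_inner_le_of_lt_inner {E : Type*} [NormedAddCommGroup E]
    [InnerProductSpace ℝ E] {a x y : E} {b r : ℝ}
    (hx : ⟪a, x⟫ ≤ b - r * ‖a‖) (hy : b < ⟪a, y⟫) : r < ‖x - y‖ := by
  have h : ‖a‖ * r < ‖a‖ * ‖x - y‖ :=
    calc ‖a‖ * r < ⟪a, y - x⟫ := by rw [inner_sub_right]; linarith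
      _ ≤ ‖a‖ * ‖y - x‖ := real_inner_le_norm _ _
      _ = ‖a‖ * ‖x - y‖ := by rw [norm_sub_rev]
  exact lt_of_mul_lt_mul_left h (norm_nonneg a)

theorem stmt_1_general (n m : ℕ) (P : Fin m → EuclideanSpace ℝ (Fin n)) (q : Fin m → ℝ)
    (r : ℝ)
    (x : EuclideanSpace ℝ (Fin n)) (hx : ∀ i, (inner ℝ (P i) x : ℝ) ≤ q i - r * ‖P i‖)
    (y : EuclideanSpace ℝ (Fin n)) (hy : ¬ (∀ i, (inner ℝ (P i) y : ℝ) ≤ q i)) :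
    r ≤ ‖x - y‖ := by
  obtain ⟨i, hi⟩ := not_forall.mp hy
  exact (lt_norm_sub_of_inner_le_of_lt_inner (hx i) (not_le.mp hi)).le

/-- every point of the shrunk polytope `{x | Pᵢx ≤ qᵢ - r‖Pᵢ‖}` is at
Euclidean distance at least `r` from every point of the complement of `{x | Px ≤ q}`,
assuming each row `Pᵢ` is nonzero. -/
theorem stmt_1 (n m : ℕ) (P : Fin m → EuclideanSpace ℝ (Fin n)) (q : Fin m → ℝ)
    (r : ℝ) (hr : 0 ≤ r) (hP : ∀ i, P i ≠ 0)
    (x : EuclideanSpace ℝ (Fin n)) (hx : ∀ i, (inner ℝ (P i) x : ℝ) ≤ q i - r * ‖P i‖)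
    (y : EuclideanSpace ℝ (Fin n)) (hy : ¬ (∀ i, (inner ℝ (P i) y : ℝ) ≤ q i)) :
    r ≤ ‖x - y‖ :=
  stmt_1_general n m P q r x hx y hy
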